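/- Let S be an inverse semigroup and H ⊆ S × S a symmetric set generating a left congruence ρ = ⟨H⟩. For each pair (a,b) ∈ H, the three pairs (a⁻¹b, a⁻¹bb⁻¹a), (a⁻¹a, a⁻¹bb⁻¹a), (b⁻¹aa⁻¹b, b⁻¹b) all lie in ρ; conversely, if a left congruence σ contains these three pairs then (a,b) ∈ σ. Consequently ρ is generated by a set of pairs each of which has at least one idempotent coordinate, and if H is finite this set can be taken finite. -/

import Mathlib

class InverseSemigroup (S : Type*) extends Semigroup S where
  inv : S → S
  mul_inv_mul : ∀ a : S, a * inv a * a = a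
  inv_mul_inv : ∀ a : S, inv a * a * inv a = inv a
  inv_unique : ∀ a b : S, a * b * a = a → b * a * b = b → b = inv a

open InverseSemigroup

/-- `e` is an idempotent. -/
def IsIdem {S : Type*} [Mul S] (e : S) : Prop := e * e = e

/-- `r` is a left congruence: an equivalence relation compatible with left multiplication. -/
def IsLeftCongruence {S : Type*} [Semigroup S] (r : S → S → Prop) : Prop :=
  Equivalence r ∧ ∀ a b c : S, r a b → r (c * a) (c * b)

/-- The inverse kernel of a relation: elements related to `a * a⁻¹`. -/
def InK {S : Type*} [InverseSemigroup S] (r : S → S → Prop) : Set S :=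
  {a | r a (a * inv a)}

/-- The kernel: elements related to some idempotent. -/
def lker {S : Type*} [InverseSemigroup S] (r : S → S → Prop) : Set S :=
  {a | ∃ e, IsIdem e ∧ r a e}

/-- `τ` is a congruence on the semilattice of idempotents `E(S)`. -/
def IsECong {S : Type*} [InverseSemigroup S] (τ : S → S → Prop) : Prop :=
  (∀ e f, τ e f → IsIdem e ∧ IsIdem f) ∧
  (∀ e, IsIdem e → τ e e) ∧
  (∀ e f, τ e f → τ f e) ∧
  (∀ e f g, τ e f → τ f g → τ e g) ∧
  (∀ e f g, IsIdem g → τ e f → τ (g * e) (g * f))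

/-- The normaliser of a congruence on the idempotents. -/
def normaliser {S : Type*} [InverseSemigroup S] (τ : S → S → Prop) : Set S :=
  {a | ∀ e f, τ e f → τ (a * e * inv a) (a * f * inv a) ∧ τ (inv a * e * a) (inv a * f * a)}

/-- `T` is a full inverse subsemigroup of `S`. -/
def IsFullInverseSub {S : Type*} [InverseSemigroup S] (T : Set S) : Prop :=
  (∀ e : S, IsIdem e → e ∈ T) ∧ (∀ a b, a ∈ T → b ∈ T → a * b ∈ T) ∧
  (∀ a, a ∈ T → inv a ∈ T)

/-- The left congruence generated by a binary relation `H`. -/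
def genLC {S : Type*} [Semigroup S] (H : S → S → Prop) : S → S → Prop :=
  fun a b => ∀ σ : S → S → Prop, IsLeftCongruence σ → (∀ x y, H x y → σ x y) → σ a b

/-!
Left-multiplying `a ρ b` by `a⁻¹`, by `a⁻¹bb⁻¹` and (symmetrically) by `b⁻¹` and `b⁻¹aa⁻¹` yields
the three pairs. Conversely, the first two give `a⁻¹a σ a⁻¹b`, hence `a σ aa⁻¹b` after multiplying
by `a`, and the third multiplied by `b` gives `aa⁻¹b σ b`, because idempotents commute. So the
three pairs of each generator, which all have an idempotent coordinate, generate the same left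
congruence as `H`.
-/

section Idempotents

variable {S : Type*} [InverseSemigroup S] {e f : S}

namespace InverseSemigroup

lemma isIdem_mul_inv (a : S) : IsIdem (a * inv a) := by
  rw [IsIdem, ← mul_assoc, mul_inv_mul]

lemma isIdem_inv_mul (a : S) : IsIdem (inv a * a) := by
  rw [IsIdem, ← mul_assoc, inv_mul_inv]

lemma inv_inv (a : S) : inv (inv a) = a :=
  (inv_unique (inv a) a (inv_mul_inv a) (mul_inv_mul a)).symm

end InverseSemigroup

namespace IsIdem

lemma inv_eq (he : IsIdem e) : inv e = e :=
  (inv_unique e e (by rw [he, he]) (by rw [he, he])).symm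

lemma mul_self_mul (he : IsIdem e) (x : S) : e * (e * x) = e * x := by
  rw [← mul_assoc, he]

/-- `x := (ef)⁻¹` equals `fxe` by uniqueness of inverses, which makes `x`, hence `ef = x⁻¹`,
idempotent. -/
lemma mul (he : IsIdem e) (hf : IsIdem f) : IsIdem (e * f) := by
  set x := inv (e * f)
  have hxe : x * (e * (f * (x * e))) = x * e := by
    simpa only [mul_assoc] using congrArg (· * e) (inv_mul_inv (e * f))
  have hx : f * x * e = x := by
    refine inv_unique (e * f) (f * x * e) ?_ ?_
    · simpa only [mul_assoc, he.mul_self_mul, hf.mul_self_mul] using mul_inv_mul (e * f)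
    · simp only [mul_assoc, he.mul_self_mul, hf.mul_self_mul, hxe]
  have hxx : IsIdem x := by
    calc x * x = f * x * e * (f * x * e) := by rw [hx]
      _ = f * (x * (e * (f * (x * e)))) := by simp only [mul_assoc]
      _ = x := by rw [hxe, ← mul_assoc, hx]
  rw [← InverseSemigroup.inv_inv (e * f), hxx.inv_eq]
  exact hxx

lemma mul_comm (he : IsIdem e) (hf : IsIdem f) : e * f = f * e := by
  have hef := he.mul hf
  have hfe := hf.mul he
  have h := inv_unique (e * f) (f * e)
    (by simpa only [IsIdem, mul_assoc, he.mul_self_mul, hf.mul_self_mul] using hef)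
    (by simpa only [IsIdem, mul_assoc, he.mul_self_mul, hf.mul_self_mul] using hfe)
  rw [h, hef.inv_eq]

lemma inv_mul_mul (he : IsIdem e) (a : S) : IsIdem (inv a * e * a) := by
  calc inv a * e * a * (inv a * e * a) = inv a * (e * (a * inv a)) * e * a := by
        simp only [mul_assoc]
    _ = inv a * e * a := by
        rw [he.mul_comm (isIdem_mul_inv a), ← mul_assoc, ← mul_assoc, inv_mul_inv,
          mul_assoc _ e e, he]

end IsIdem

namespace InverseSemigroup

lemma isIdem_inv_mul_mul_inv_mul (a b : S) : IsIdem (inv a * b * inv b * a) := by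
  simpa only [mul_assoc] using (isIdem_mul_inv b).inv_mul_mul a

lemma mul_inv_mul_mul_inv_mul (a b : S) : b * (inv b * a * inv a * b) = a * inv a * b := by
  calc b * (inv b * a * inv a * b) = b * inv b * (a * inv a) * b := by simp only [mul_assoc]
    _ = a * inv a * (b * inv b * b) := by
        rw [(isIdem_mul_inv b).mul_comm (isIdem_mul_inv a), mul_assoc]
    _ = a * inv a * b := by rw [mul_inv_mul]

end InverseSemigroup

end Idempotents

section LeftCongruence

variable {S : Type*}

lemma isLeftCongruence_genLC [Semigroup S] (R : S → S → Prop) : IsLeftCongruence (genLC R) :=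
  ⟨⟨fun a _ hσ _ => hσ.1.refl a,
    fun h σ hσ hR => hσ.1.symm (h σ hσ hR),
    fun h₁ h₂ σ hσ hR => hσ.1.trans (h₁ σ hσ hR) (h₂ σ hσ hR)⟩,
   fun _ _ c h σ hσ hR => hσ.2 _ _ c (h σ hσ hR)⟩

lemma le_genLC [Semigroup S] (R : S → S → Prop) : R ≤ genLC R :=
  fun a b h _ _ hR => hR a b h

lemma genLC_le [Semigroup S] {R σ : S → S → Prop} (hσ : IsLeftCongruence σ) (h : R ≤ σ) :
    genLC R ≤ σ :=
  fun _ _ hab => hab σ hσ h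

namespace IsLeftCongruence

variable [InverseSemigroup S] {σ : S → S → Prop} {a b : S}

lemma inv_mul_rel (hσ : IsLeftCongruence σ) (h : σ a b) :
    σ (inv a * b) (inv a * b * inv b * a) := by
  have hb : inv a * b * inv b * b = inv a * b := by
    rw [mul_assoc _ (inv b) b, mul_assoc (inv a) b, ← mul_assoc b, mul_inv_mul]
  have h' := hσ.2 a b (inv a * b * inv b) h
  rw [hb] at h'
  exact hσ.1.symm h'

lemma inv_mul_self_rel (hσ : IsLeftCongruence σ) (h : σ a b) :
    σ (inv a * a) (inv a * b * inv b * a) :=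
  hσ.1.trans (hσ.2 a b (inv a) h) (hσ.inv_mul_rel h)

lemma rel_inv_mul_self (hσ : IsLeftCongruence σ) (h : σ a b) :
    σ (inv b * a * inv a * b) (inv b * b) :=
  hσ.1.symm (hσ.inv_mul_self_rel (hσ.1.symm h))

lemma rel_of_inv_mul (hσ : IsLeftCongruence σ)
    (h₁ : σ (inv a * b) (inv a * b * inv b * a))
    (h₂ : σ (inv a * a) (inv a * b * inv b * a))
    (h₃ : σ (inv b * a * inv a * b) (inv b * b)) : σ a b := by
  have ha : σ a (a * inv a * b) := by
    simpa only [← mul_assoc, mul_inv_mul] using hσ.2 _ _ a (hσ.1.trans h₂ (hσ.1.symm h₁))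
  have hb : σ (a * inv a * b) b := by
    simpa only [mul_inv_mul_mul_inv_mul, ← mul_assoc b (inv b), mul_inv_mul] using hσ.2 _ _ b h₃
  exact hσ.1.trans ha hb

end IsLeftCongruence

end LeftCongruence

section IdempotentGenerators

variable {S : Type*} [InverseSemigroup S]

def idemPairs (a b : S) : Set (S × S) :=
  {(inv a * b, inv a * b * inv b * a), (inv a * a, inv a * b * inv b * a),
    (inv b * a * inv a * b, inv b * b)}

def idemGen (H : S → S → Prop) (x y : S) : Prop :=
  ∃ a b, H a b ∧ (x, y) ∈ idemPairs a b

lemma isIdem_of_idemGen {H : S → S → Prop} {x y : S} (h : idemGen H x y) :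
    IsIdem x ∨ IsIdem y := by
  obtain ⟨a, b, -, hxy⟩ := h
  simp only [idemPairs, Set.mem_insert_iff, Set.mem_singleton_iff, Prod.mk.injEq] at hxy
  rcases hxy with ⟨rfl, rfl⟩ | ⟨rfl, rfl⟩ | ⟨rfl, rfl⟩
  · exact .inr (isIdem_inv_mul_mul_inv_mul a b)
  · exact .inl (isIdem_inv_mul a)
  · exact .inr (isIdem_inv_mul b)

lemma genLC_idemGen (H : S → S → Prop) : genLC (idemGen H) = genLC H := by
  have hH := isLeftCongruence_genLC H
  have hG := isLeftCongruence_genLC (idemGen H)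
  refine le_antisymm (genLC_le hH ?_) (genLC_le hG ?_)
  · rintro x y ⟨a, b, hab, hxy⟩
    have hab := le_genLC H a b hab
    simp only [idemPairs, Set.mem_insert_iff, Set.mem_singleton_iff, Prod.mk.injEq] at hxy
    rcases hxy with ⟨rfl, rfl⟩ | ⟨rfl, rfl⟩ | ⟨rfl, rfl⟩
    exacts [hH.inv_mul_rel hab, hH.inv_mul_self_rel hab, hH.rel_inv_mul_self hab]
  · intro a b hab
    have hgen : ∀ p ∈ idemPairs a b, genLC (idemGen H) p.1 p.2 :=
      fun p hp => le_genLC _ p.1 p.2 ⟨a, b, hab, hp⟩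
    exact hG.rel_of_inv_mul (hgen _ (.inl rfl)) (hgen _ (.inr (.inl rfl)))
      (hgen _ (.inr (.inr rfl)))

lemma finite_setOf_idemGen {H : S → S → Prop} (hH : {p : S × S | H p.1 p.2}.Finite) :
    {p : S × S | idemGen H p.1 p.2}.Finite := by
  have h : {p : S × S | idemGen H p.1 p.2} = ⋃ q ∈ {q : S × S | H q.1 q.2}, idemPairs q.1 q.2 := by
    ext p
    simp [idemGen]
  rw [h]
  exact hH.biUnion fun q _ => by unfold idemPairs; exact Set.toFinite _

end IdempotentGenerators

theorem stmt17_general {S : Type*} [InverseSemigroup S] (H : S → S → Prop) :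
    (∀ a b : S, H a b →
      genLC H (inv a * b) (inv a * b * inv b * a) ∧
      genLC H (inv a * a) (inv a * b * inv b * a) ∧
      genLC H (inv b * a * inv a * b) (inv b * b)) ∧
    (∀ σ : S → S → Prop, IsLeftCongruence σ → ∀ a b : S,
      σ (inv a * b) (inv a * b * inv b * a) →
      σ (inv a * a) (inv a * b * inv b * a) →
      σ (inv b * a * inv a * b) (inv b * b) → σ a b) ∧
    (∃ H' : S → S → Prop,
      (∀ x y, H' x y → IsIdem x ∨ IsIdem y) ∧
      genLC H' = genLC H ∧
      ({p : S × S | H p.1 p.2}.Finite → {p : S × S | H' p.1 p.2}.Finite)) := by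
  have hρ := isLeftCongruence_genLC H
  refine ⟨fun a b hab => ?_, fun σ hσ a b => hσ.rel_of_inv_mul,
    idemGen H, fun x y => isIdem_of_idemGen, genLC_idemGen H, finite_setOf_idemGen⟩
  have hab := le_genLC H a b hab
  exact ⟨hρ.inv_mul_rel hab, hρ.inv_mul_self_rel hab, hρ.rel_inv_mul_self hab⟩

theorem stmt17 {S : Type*} [InverseSemigroup S] (H : S → S → Prop)
    (hsym : ∀ a b, H a b → H b a) :
    (∀ a b : S, H a b →
      genLC H (inv a * b) (inv a * b * inv b * a) ∧
      genLC H (inv a * a) (inv a * b * inv b * a) ∧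
      genLC H (inv b * a * inv a * b) (inv b * b)) ∧
    (∀ σ : S → S → Prop, IsLeftCongruence σ → ∀ a b : S,
      σ (inv a * b) (inv a * b * inv b * a) →
      σ (inv a * a) (inv a * b * inv b * a) →
      σ (inv b * a * inv a * b) (inv b * b) → σ a b) ∧
    (∃ H' : S → S → Prop,
      (∀ x y, H' x y → IsIdem x ∨ IsIdem y) ∧
      genLC H' = genLC H ∧
      ({p : S × S | H p.1 p.2}.Finite → {p : S × S | H' p.1 p.2}.Finite)) :=
  stmt17_general H
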